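/- Let S = k[λ_1,...,λ_p][x_1,...,x_n] be multigraded with deg x_i = a_i ∈ Z^d and deg λ_i = 0, let K = Frac(k[λ]), and let N ⊆ S^r be a multigraded submodule with Gröbner base P_1,...,P_s with respect to the order <' (comparing first the x-part by a fixed module term order <, then the λ-part lexicographically). For each i let q_i(λ) be the leading coefficient of the image of P_i in (K⊗S)^r. Then: (1) P_1,...,P_s is a Gröbner base of K⊗N; and (2) for any c ∈ k^p with q_i(c) ≠ 0 for all i, the specializations P_1(c),...,P_s(c) form a Gröbner base of the specialized module N^c and the sets of leading exponents of K⊗N and N^c coincide. -/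
import Mathlib


set_option synthInstance.maxHeartbeats 1000000
set_option maxHeartbeats 1000000

noncomputable section

/-- The index set of the monomials of the free module `R[x_1,…,x_n]^r`:
pairs (exponent vector, component index). -/
abbrev MonoIdx (n r : ℕ) := (Fin n →₀ ℕ) × Fin r

/-- The set of monomials appearing in a vector of polynomials. -/
def supportV {R : Type} [CommRing R] {n r : ℕ} (P : Fin r → MvPolynomial (Fin n) R) :
    Finset (MonoIdx n r) :=
  (Finset.univ : Finset (Fin r)).biUnion fun j => (P j).support.image fun m => (m, j)

/-- `e` is the leading exponent of `P` with respect to the (strict) module term order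
`rlt`. -/
def IsExp {R : Type} [CommRing R] {n r : ℕ} (rlt : MonoIdx n r → MonoIdx n r → Prop)
    (P : Fin r → MvPolynomial (Fin n) R) (e : MonoIdx n r) : Prop :=
  e ∈ supportV P ∧ ∀ e' ∈ supportV P, e' ≠ e → rlt e' e

/-- A family `G` of elements of a submodule `N ⊆ R[x]^r` is a Gröbner base of `N`:
its members lie in `N` and every leading exponent of a nonzero element of `N` is
divisible by the leading exponent of some member of `G` (same component index,
exponents differing by an element of `ℕ^n`). -/
def IsGroebnerBase {R : Type} [CommRing R] {n r s : ℕ}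
    (rlt : MonoIdx n r → MonoIdx n r → Prop)
    (G : Fin s → (Fin r → MvPolynomial (Fin n) R))
    (N : Submodule (MvPolynomial (Fin n) R) (Fin r → MvPolynomial (Fin n) R)) : Prop :=
  (∀ i, G i ∈ N) ∧
    ∀ P ∈ N, P ≠ 0 → ∀ e, IsExp rlt P e →
      ∃ i eg, IsExp rlt (G i) eg ∧ eg.2 = e.2 ∧ ∃ δ : Fin n →₀ ℕ, e.1 = eg.1 + δ


variable {k : Type} [Field k] {n p r s : ℕ}

section AuxGeneric

variable {R : Type} [CommRing R] {n r : ℕ}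

lemma mem_supportV {P : Fin r → MvPolynomial (Fin n) R} {m : MonoIdx n r} :
    m ∈ supportV P ↔ (P m.2).coeff m.1 ≠ 0 := by
  simp only [supportV, Finset.mem_biUnion, Finset.mem_image, Finset.mem_univ, true_and,
    MvPolynomial.mem_support_iff]
  constructor
  · rintro ⟨j, a, ha, rfl⟩; exact ha
  · intro h; exact ⟨m.2, m.1, h, rfl⟩

lemma ne_zero_of_mem_supportV {P : Fin r → MvPolynomial (Fin n) R} {m : MonoIdx n r}
    (h : m ∈ supportV P) : P ≠ 0 := by
  rintro rfl
  rw [mem_supportV] at h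
  simp at h

lemma finset_exists_max {α : Type*} (rlt : α → α → Prop) [IsTrichotomous α rlt]
    [IsTrans α rlt] {t : Finset α} (ht : t.Nonempty) :
    ∃ m ∈ t, ∀ x ∈ t, x ≠ m → rlt x m := by
  classical
  induction t using Finset.cons_induction with
  | empty => exact absurd ht (by simp)
  | cons a u ha ih =>
    rcases u.eq_empty_or_nonempty with rfl | hu
    · refine ⟨a, by simp, ?_⟩
      intro x hx hxa
      simp only [Finset.cons_empty, Finset.mem_singleton] at hx
      exact absurd hx hxa
    · obtain ⟨m, hm, hmax⟩ := ih hu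
      rcases trichotomous_of rlt a m with hlt | rfl | hgt
      · refine ⟨m, Finset.mem_cons_of_mem hm, ?_⟩
        intro x hx hxm
        rcases Finset.mem_cons.mp hx with rfl | hx'
        · exact hlt
        · exact hmax x hx' hxm
      · exact absurd hm ha
      · refine ⟨a, Finset.mem_cons_self _ _, ?_⟩
        intro x hx hxa
        rcases Finset.mem_cons.mp hx with rfl | hx'
        · exact absurd rfl hxa
        · rcases eq_or_ne x m with rfl | hxm
          · exact hgt
          · exact IsTrans.trans x m a (hmax x hx' hxm) hgt

lemma exists_isExp (rlt : MonoIdx n r → MonoIdx n r → Prop) [IsWellOrder (MonoIdx n r) rlt]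
    {P : Fin r → MvPolynomial (Fin n) R} (hP : P ≠ 0) : ∃ E, IsExp rlt P E := by
  have hne : (supportV P).Nonempty := by
    by_contra h
    rw [Finset.not_nonempty_iff_eq_empty] at h
    apply hP
    funext j
    apply MvPolynomial.ext
    intro m
    rw [Pi.zero_apply, MvPolynomial.coeff_zero]
    have : ((m, j) : MonoIdx n r) ∉ supportV P := by simp [h]
    simpa [mem_supportV] using this
  obtain ⟨m, hm, hmax⟩ := finset_exists_max rlt hne
  exact ⟨m, hm, hmax⟩

lemma rlt_asymm (rlt : MonoIdx n r → MonoIdx n r → Prop) [IsWellOrder (MonoIdx n r) rlt]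
    {a b : MonoIdx n r} (h1 : rlt a b) (h2 : rlt b a) : False :=
  (IsWellFounded.wf (r := rlt)).asymmetric a b h1 h2

lemma isExp_unique (rlt : MonoIdx n r → MonoIdx n r → Prop) [IsWellOrder (MonoIdx n r) rlt]
    {P : Fin r → MvPolynomial (Fin n) R} {E E' : MonoIdx n r}
    (h : IsExp rlt P E) (h' : IsExp rlt P E') : E = E' := by
  by_contra hne
  exact rlt_asymm rlt (h'.2 E h.1 hne) (h.2 E' h'.1 (Ne.symm hne))

lemma isExp_of_supportV_eq {S : Type} [CommRing S]
    (rlt : MonoIdx n r → MonoIdx n r → Prop)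
    {P : Fin r → MvPolynomial (Fin n) R} {Q : Fin r → MvPolynomial (Fin n) S}
    (h : supportV P = supportV Q) {E : MonoIdx n r}
    (hE : IsExp rlt P E) : IsExp rlt Q E := by
  unfold IsExp at hE ⊢
  rw [← h]
  exact hE

lemma supportV_map_eq {S : Type} [CommRing S] (φ : R →+* S) (hφ : Function.Injective φ)
    (P : Fin r → MvPolynomial (Fin n) R) :
    supportV (fun j => MvPolynomial.map φ (P j)) = supportV P := by
  ext m
  simp [mem_supportV, MvPolynomial.coeff_map, map_eq_zero_iff φ hφ]

lemma isExp_monomial_mul {F : Type} [Field F] (rlt : MonoIdx n r → MonoIdx n r → Prop)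
    [IsWellOrder (MonoIdx n r) rlt]
    (hcompat : ∀ (a b : MonoIdx n r) (δ : Fin n →₀ ℕ),
      rlt a b → rlt (a.1 + δ, a.2) (b.1 + δ, b.2))
    {P : Fin r → MvPolynomial (Fin n) F} {eg : MonoIdx n r} (h : IsExp rlt P eg)
    (δ : Fin n →₀ ℕ) :
    IsExp rlt (fun j => (MvPolynomial.monomial δ (1 : F)) * P j) (eg.1 + δ, eg.2) := by
  constructor
  · rw [mem_supportV]
    show ((MvPolynomial.monomial δ (1 : F)) * P eg.2).coeff (eg.1 + δ) ≠ 0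
    rw [add_comm, MvPolynomial.coeff_monomial_mul, one_mul]
    exact mem_supportV.mp h.1
  · intro m hm hne
    rw [mem_supportV] at hm
    change ((MvPolynomial.monomial δ (1 : F)) * P m.2).coeff m.1 ≠ 0 at hm
    rw [MvPolynomial.coeff_monomial_mul'] at hm
    split_ifs at hm with hle
    · rw [one_mul] at hm
      have ht : ((m.1 - δ, m.2) : MonoIdx n r) ∈ supportV P := mem_supportV.mpr hm
      have hne' : ((m.1 - δ, m.2) : MonoIdx n r) ≠ eg := by
        intro heq
        apply hne
        have h1 := congrArg Prod.fst heq
        have h2 := congrArg Prod.snd heq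
        simp only at h1 h2
        have : m.1 = eg.1 + δ := by
          rw [← h1, tsub_add_cancel_of_le hle]
        exact Prod.ext_iff.mpr ⟨this, h2⟩
      have hlt := hcompat _ _ δ (h.2 _ ht hne')
      rwa [tsub_add_cancel_of_le hle, Prod.mk.eta] at hlt
    · exact absurd rfl hm

end AuxGeneric

/-- The coefficient ring `k[λ_1,…,λ_p]`. -/
abbrev CoeffRing (k : Type) [Field k] (p : ℕ) := MvPolynomial (Fin p) k

/-- The parameter ring `S = k[λ][x]`, with the `λ`s as coefficients. -/
abbrev ParamRing (k : Type) [Field k] (p n : ℕ) :=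
  MvPolynomial (Fin n) (CoeffRing k p)

/-- The fraction field `K = Frac(k[λ])`. -/
abbrev ParamField (k : Type) [Field k] (p : ℕ) := FractionRing (CoeffRing k p)

/-- Base change `S^r → (K ⊗ S)^r = K[x]^r`. -/
def toK (P : Fin r → ParamRing k p n) : Fin r → MvPolynomial (Fin n) (ParamField k p) :=
  fun j => MvPolynomial.map (algebraMap (CoeffRing k p) (ParamField k p)) (P j)

/-- Specialization `S^r → k[x]^r` at `λ = c`. -/
def toSpec (c : Fin p → k) (P : Fin r → ParamRing k p n) :
    Fin r → MvPolynomial (Fin n) k :=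
  fun j => MvPolynomial.map (MvPolynomial.eval c) (P j)

section AuxSpec

variable (K : Type) [Field K] [Algebra (CoeffRing k p) K]
  [IsFractionRing (CoeffRing k p) K]

/-- Generic base change, with the fraction field replaced by an abstract field `K`. -/
def toKg (P : Fin r → ParamRing k p n) : Fin r → MvPolynomial (Fin n) K :=
  fun j => MvPolynomial.map (algebraMap (CoeffRing k p) K) (P j)

lemma toK_eq_toKg : (toK : (Fin r → ParamRing k p n) → _) = toKg (ParamField k p) := rfl

lemma toSpec_zero (c : Fin p → k) : toSpec c (0 : Fin r → ParamRing k p n) = 0 := by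
  funext j
  simp [toSpec]

lemma mem_span_toSpec (c : Fin p → k)
    (N : Submodule (ParamRing k p n) (Fin r → ParamRing k p n))
    {Q : Fin r → MvPolynomial (Fin n) k}
    (hQ : Q ∈ Submodule.span (MvPolynomial (Fin n) k)
      (toSpec c '' (N : Set (Fin r → ParamRing k p n)))) :
    ∃ R ∈ N, toSpec c R = Q := by
  induction hQ using Submodule.span_induction with
  | mem Q hQ => obtain ⟨R, hR, rfl⟩ := hQ; exact ⟨R, hR, rfl⟩
  | zero => exact ⟨0, N.zero_mem, toSpec_zero c⟩
  | add Q1 Q2 _ _ h1 h2 =>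
    obtain ⟨R1, hR1, rfl⟩ := h1
    obtain ⟨R2, hR2, rfl⟩ := h2
    exact ⟨R1 + R2, N.add_mem hR1 hR2, funext fun j => by simp [toSpec]⟩
  | smul f Q _ h =>
    obtain ⟨R, hR, rfl⟩ := h
    refine ⟨(MvPolynomial.map MvPolynomial.C f) • R, N.smul_mem _ hR, funext fun j => ?_⟩
    show MvPolynomial.map (MvPolynomial.eval c) (MvPolynomial.map MvPolynomial.C f * R j)
      = f * MvPolynomial.map (MvPolynomial.eval c) (R j)
    rw [map_mul, MvPolynomial.map_map]
    have hcomp : (MvPolynomial.eval c).comp (MvPolynomial.C : k →+* CoeffRing k p)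
        = RingHom.id k := RingHom.ext fun a => MvPolynomial.eval_C _
    rw [hcomp, MvPolynomial.map_id]

/-- The "clearing denominators" predicate. -/
def KPred (N : Submodule (ParamRing k p n) (Fin r → ParamRing k p n))
    (Q : Fin r → MvPolynomial (Fin n) K) : Prop :=
  ∃ q : CoeffRing k p, q ≠ 0 ∧ ∃ R ∈ N, toKg K R =
    fun j => MvPolynomial.C (algebraMap (CoeffRing k p) K q) * Q j

variable {K}

lemma KPred_add {N : Submodule (ParamRing k p n) (Fin r → ParamRing k p n)}
    {Q1 Q2 : Fin r → MvPolynomial (Fin n) K}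
    (h1 : KPred K N Q1) (h2 : KPred K N Q2) : KPred K N (Q1 + Q2) := by
  obtain ⟨q1, hq1, R1, hR1, hK1⟩ := h1
  obtain ⟨q2, hq2, R2, hR2, hK2⟩ := h2
  refine ⟨q1 * q2, mul_ne_zero hq1 hq2,
    (MvPolynomial.C q2 : ParamRing k p n) • R1 + (MvPolynomial.C q1 : ParamRing k p n) • R2,
    N.add_mem (N.smul_mem _ hR1) (N.smul_mem _ hR2), funext fun j => ?_⟩
  show MvPolynomial.map (algebraMap (CoeffRing k p) K)
      (MvPolynomial.C q2 * R1 j + MvPolynomial.C q1 * R2 j) = _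
  rw [map_add, map_mul, map_mul, MvPolynomial.map_C, MvPolynomial.map_C]
  have e1 := congrFun hK1 j
  have e2 := congrFun hK2 j
  simp only [toKg] at e1 e2
  rw [e1, e2]
  simp only [Pi.add_apply, map_mul, MvPolynomial.C_mul]
  ring

lemma KPred_C_smul {N : Submodule (ParamRing k p n) (Fin r → ParamRing k p n)}
    {Q : Fin r → MvPolynomial (Fin n) K} (a : K)
    (h : KPred K N Q) : KPred K N (fun j => MvPolynomial.C a * Q j) := by
  obtain ⟨q, hq, R, hR, hK⟩ := h
  obtain ⟨x, hd⟩ := IsLocalization.surj (nonZeroDivisors (CoeffRing k p)) a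
  have hd0 : (x.2 : CoeffRing k p) ≠ 0 := nonZeroDivisors.ne_zero x.2.prop
  refine ⟨x.2 * q, mul_ne_zero hd0 hq, (MvPolynomial.C x.1 : ParamRing k p n) • R,
    N.smul_mem _ hR, funext fun j => ?_⟩
  show MvPolynomial.map (algebraMap (CoeffRing k p) K)
      (MvPolynomial.C x.1 * R j) = _
  rw [map_mul, MvPolynomial.map_C]
  have e1 := congrFun hK j
  simp only [toKg] at e1
  rw [e1, ← hd]
  simp only [map_mul, MvPolynomial.C_mul]
  ring

lemma KPred_X_smul {N : Submodule (ParamRing k p n) (Fin r → ParamRing k p n)}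
    {Q : Fin r → MvPolynomial (Fin n) K} (i : Fin n)
    (h : KPred K N Q) : KPred K N (fun j => MvPolynomial.X i * Q j) := by
  obtain ⟨q, hq, R, hR, hK⟩ := h
  refine ⟨q, hq, (MvPolynomial.X i : ParamRing k p n) • R, N.smul_mem _ hR,
    funext fun j => ?_⟩
  show MvPolynomial.map (algebraMap (CoeffRing k p) K)
      (MvPolynomial.X i * R j) = _
  rw [map_mul, MvPolynomial.map_X]
  have e1 := congrFun hK j
  simp only [toKg] at e1
  rw [e1]
  ring

lemma KPred_congr {N : Submodule (ParamRing k p n) (Fin r → ParamRing k p n)}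
    {Q Q' : Fin r → MvPolynomial (Fin n) K} (hQQ : Q = Q')
    (h : KPred K N Q) : KPred K N Q' := hQQ ▸ h

lemma mem_span_toK (N : Submodule (ParamRing k p n) (Fin r → ParamRing k p n))
    {Q : Fin r → MvPolynomial (Fin n) K}
    (hQ : Q ∈ Submodule.span (MvPolynomial (Fin n) K)
      (toKg K '' (N : Set (Fin r → ParamRing k p n)))) :
    KPred K N Q := by
  induction hQ using Submodule.span_induction with
  | mem Q hQ =>
    obtain ⟨R, hR, rfl⟩ := hQ
    exact ⟨1, one_ne_zero, R, hR, funext fun j => by simp⟩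
  | zero => exact ⟨1, one_ne_zero, 0, N.zero_mem, funext fun j => by simp [toKg]⟩
  | add Q1 Q2 _ _ h1 h2 => exact KPred_add h1 h2
  | smul f Q _ h =>
    have key : ∀ g : MvPolynomial (Fin n) K,
        ∀ Q' : Fin r → MvPolynomial (Fin n) K,
        KPred K N Q' → KPred K N (fun j => g * Q' j) := by
      intro g
      induction g using MvPolynomial.induction_on with
      | C a => exact fun Q' h' => KPred_C_smul a h'
      | add f1 f2 ih1 ih2 =>
        intro Q' h'
        have h2 := KPred_add (ih1 Q' h') (ih2 Q' h')
        refine KPred_congr (funext fun j => ?_) h2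
        show f1 * Q' j + f2 * Q' j = (f1 + f2) * Q' j
        ring
      | mul_X f1 i ih =>
        intro Q' h'
        have h2 := KPred_X_smul i (ih Q' h')
        refine KPred_congr (funext fun j => ?_) h2
        show MvPolynomial.X i * (f1 * Q' j) = f1 * MvPolynomial.X i * Q' j
        ring
    have h3 := key f Q h
    exact KPred_congr (funext fun j => rfl) h3

lemma isExp_toSpec (rlt : MonoIdx n r → MonoIdx n r → Prop)
    [IsWellOrder (MonoIdx n r) rlt] {c : Fin p → k}
    {Pi : Fin r → ParamRing k p n} {ei : MonoIdx n r}
    (h : IsExp rlt Pi ei)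
    (hc : MvPolynomial.eval c ((Pi ei.2).coeff ei.1) ≠ 0) :
    IsExp rlt (toSpec c Pi) ei := by
  constructor
  · rw [mem_supportV]
    show (MvPolynomial.map (MvPolynomial.eval c) (Pi ei.2)).coeff ei.1 ≠ 0
    rw [MvPolynomial.coeff_map]
    exact hc
  · intro m hm hne
    refine h.2 m ?_ hne
    rw [mem_supportV] at hm ⊢
    intro h0
    apply hm
    show (MvPolynomial.map (MvPolynomial.eval c) (Pi m.2)).coeff m.1 = 0
    rw [MvPolynomial.coeff_map, h0, map_zero]

lemma supportV_toSpec_subset {c : Fin p → k} {R : Fin r → ParamRing k p n} :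
    supportV (toSpec c R) ⊆ supportV R := by
  intro m hm
  rw [mem_supportV] at hm ⊢
  intro h0
  apply hm
  show (MvPolynomial.map (MvPolynomial.eval c) (R m.2)).coeff m.1 = 0
  rw [MvPolynomial.coeff_map, h0, map_zero]

lemma isExp_toKg (rlt : MonoIdx n r → MonoIdx n r → Prop)
    [IsWellOrder (MonoIdx n r) rlt]
    {Pi : Fin r → ParamRing k p n} {ei : MonoIdx n r} (h : IsExp rlt Pi ei) :
    IsExp rlt (toKg K Pi) ei := by
  have hinj : Function.Injective (algebraMap (CoeffRing k p) K) :=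
    IsFractionRing.injective _ _
  exact isExp_of_supportV_eq rlt (supportV_map_eq _ hinj Pi).symm h

lemma groebner_toKg (rlt : MonoIdx n r → MonoIdx n r → Prop)
    [IsWellOrder (MonoIdx n r) rlt]
    (N : Submodule (ParamRing k p n) (Fin r → ParamRing k p n))
    (P : Fin s → (Fin r → ParamRing k p n))
    (hGB : IsGroebnerBase rlt P N) :
    IsGroebnerBase rlt (fun i => toKg K (P i))
      (Submodule.span (MvPolynomial (Fin n) K)
        (toKg K '' (N : Set (Fin r → ParamRing k p n)))) := by
  have hinj : Function.Injective (algebraMap (CoeffRing k p) K) :=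
    IsFractionRing.injective _ _
  constructor
  · intro i
    exact Submodule.subset_span ⟨P i, hGB.1 i, rfl⟩
  · intro Q hQ hQ0 E hE
    obtain ⟨q, hq, R, hRN, hR⟩ := mem_span_toK N hQ
    have hq' : algebraMap (CoeffRing k p) K q ≠ 0 :=
      fun h0 => hq (hinj (by rw [h0, map_zero]))
    have hsupp1 : supportV (toKg K R) = supportV Q := by
      rw [hR]
      ext m
      simp [mem_supportV, MvPolynomial.coeff_C_mul, mul_eq_zero, hq']
    have hsupp2 : supportV (toKg K R) = supportV R :=
      supportV_map_eq _ hinj R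
    have hER : IsExp rlt R E :=
      isExp_of_supportV_eq rlt (hsupp1.symm.trans hsupp2) hE
    have hR0 : R ≠ 0 := ne_zero_of_mem_supportV hER.1
    obtain ⟨i, eg, hgi, h2, δ, hδ⟩ := hGB.2 R hRN hR0 E hER
    exact ⟨i, eg, isExp_toKg rlt hgi, h2, δ, hδ⟩

/-- The key descent lemma: every leading exponent of the specialized module is
divisible by the leading exponent of one of the `P i`. -/
lemma descent (rlt : MonoIdx n r → MonoIdx n r → Prop)
    [IsWellOrder (MonoIdx n r) rlt]
    (hcompat : ∀ (a b : MonoIdx n r) (δ : Fin n →₀ ℕ),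
      rlt a b → rlt (a.1 + δ, a.2) (b.1 + δ, b.2))
    (N : Submodule (ParamRing k p n) (Fin r → ParamRing k p n))
    (P : Fin s → (Fin r → ParamRing k p n))
    (hGB : IsGroebnerBase rlt P N)
    (e : Fin s → MonoIdx n r) (he : ∀ i, IsExp rlt (P i) (e i))
    (c : Fin p → k)
    (hc : ∀ i, MvPolynomial.eval c ((P i (e i).2).coeff (e i).1) ≠ 0)
    {Q : Fin r → MvPolynomial (Fin n) k}
    (hQmem : Q ∈ Submodule.span (MvPolynomial (Fin n) k)
      (toSpec c '' (N : Set (Fin r → ParamRing k p n))))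
    (hQ0 : Q ≠ 0) {E : MonoIdx n r} (hE : IsExp rlt Q E) :
    ∃ i δ, E = ((e i).1 + δ, (e i).2) := by
  classical
  set Srel : Set (MonoIdx n r) :=
    {E' | ∃ R, R ∈ N ∧ (∃ u : k, u ≠ 0 ∧ toSpec c R = u • Q) ∧ IsExp rlt R E'} with hSrel
  have hSne : Srel.Nonempty := by
    obtain ⟨R0, hR0N, hR0⟩ := mem_span_toSpec c N hQmem
    have hR00 : R0 ≠ 0 := by
      rintro rfl
      rw [toSpec_zero] at hR0
      exact hQ0 hR0.symm
    obtain ⟨E0, hE0⟩ := exists_isExp rlt hR00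
    exact ⟨E0, R0, hR0N, ⟨1, one_ne_zero, by rw [hR0, one_smul]⟩, hE0⟩
  obtain ⟨ER, hERmem, hmin⟩ := (IsWellFounded.wf (r := rlt)).has_min Srel hSne
  obtain ⟨R, hRN, ⟨u, hu, hspec⟩, hExpR⟩ := hERmem
  have hsuppQ : supportV (toSpec c R) = supportV Q := by
    rw [hspec]
    ext m
    simp [mem_supportV, Pi.smul_apply, MvPolynomial.coeff_smul, smul_eq_mul, mul_eq_zero, hu]
  have hEsuppR : E ∈ supportV R :=
    supportV_toSpec_subset (by rw [hsuppQ]; exact hE.1)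
  have hR0' : R ≠ 0 := ne_zero_of_mem_supportV hEsuppR
  by_cases hEE : ER = E
  · subst hEE
    obtain ⟨i, eg, hgi, h2, δ, hδ⟩ := hGB.2 R hRN hR0' ER hExpR
    have heg : eg = e i := isExp_unique rlt hgi (he i)
    subst heg
    exact ⟨i, δ, Prod.ext_iff.mpr ⟨hδ, h2.symm⟩⟩
  · exfalso
    have hERnot : ER ∉ supportV Q := by
      intro hmem
      exact rlt_asymm rlt (hE.2 ER hmem hEE)
        (hExpR.2 E hEsuppR (fun h => hEE h.symm))
    have hcR0 : MvPolynomial.eval c ((R ER.2).coeff ER.1) = 0 := by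
      by_contra h0
      apply hERnot
      rw [← hsuppQ, mem_supportV]
      show (MvPolynomial.map (MvPolynomial.eval c) (R ER.2)).coeff ER.1 ≠ 0
      rw [MvPolynomial.coeff_map]
      exact h0
    obtain ⟨i, eg, hgi, h2, δ, hδ⟩ := hGB.2 R hRN hR0' ER hExpR
    have heg : eg = e i := isExp_unique rlt hgi (he i)
    subst heg
    obtain ⟨E1, E2⟩ := ER
    change E1 = (e i).1 + δ at hδ
    change (e i).2 = E2 at h2
    change MvPolynomial.eval c ((R E2).coeff E1) = 0 at hcR0
    change IsExp rlt R (E1, E2) at hExpR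
    subst hδ
    subst h2
    -- now ER = ((e i).1 + δ, (e i).2)
    set qi : CoeffRing k p := (P i (e i).2).coeff (e i).1 with hqi
    set cR : CoeffRing k p := (R (e i).2).coeff ((e i).1 + δ) with hcRdef
    set R'' : Fin r → ParamRing k p n :=
      (MvPolynomial.C qi : ParamRing k p n) • R -
        (MvPolynomial.monomial δ cR : ParamRing k p n) • P i with hR''def
    have hR''N : R'' ∈ N :=
      N.sub_mem (N.smul_mem _ hRN) (N.smul_mem _ (hGB.1 i))
    have hR''app : ∀ j, R'' j =
        MvPolynomial.C qi * R j - MvPolynomial.monomial δ cR * P i j := fun j => rfl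
    have hspec'' : toSpec c R'' = (MvPolynomial.eval c qi * u) • Q := by
      funext j
      show MvPolynomial.map (MvPolynomial.eval c) (R'' j) = _
      rw [hR''app, map_sub, map_mul, map_mul, MvPolynomial.map_C,
        MvPolynomial.map_monomial]
      rw [show MvPolynomial.eval c cR = 0 from hcR0, MvPolynomial.monomial_zero,
        zero_mul, sub_zero]
      have e1 := congrFun hspec j
      simp only [toSpec, Pi.smul_apply] at e1
      rw [e1]
      show _ = (MvPolynomial.eval c qi * u) • Q j
      rw [MvPolynomial.smul_eq_C_mul, MvPolynomial.smul_eq_C_mul, MvPolynomial.C_mul]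
      ring
    have hu' : MvPolynomial.eval c qi * u ≠ 0 := mul_ne_zero (hc i) hu
    have hR''0 : R'' ≠ 0 := by
      intro h0
      apply smul_ne_zero hu' hQ0
      rw [← hspec'', h0, toSpec_zero]
    have hcoeffER : (R'' (e i).2).coeff ((e i).1 + δ) = 0 := by
      rw [hR''app, MvPolynomial.coeff_sub, MvPolynomial.coeff_C_mul,
        add_comm ((e i).1) δ, MvPolynomial.coeff_monomial_mul, hqi, hcRdef,
        add_comm δ ((e i).1)]
      ring
    have hall : ∀ m ∈ supportV R'', rlt m ((e i).1 + δ, (e i).2) := by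
      intro m hm
      have hm' := mem_supportV.mp hm
      have hmne : m ≠ ((e i).1 + δ, (e i).2) := by
        rintro rfl
        exact hm' hcoeffER
      have hcases : qi * (R m.2).coeff m.1 ≠ 0 ∨
          (MvPolynomial.monomial δ cR * P i m.2).coeff m.1 ≠ 0 := by
        by_contra hcon
        push_neg at hcon
        apply hm'
        rw [hR''app, MvPolynomial.coeff_sub, MvPolynomial.coeff_C_mul, hcon.1, hcon.2,
          sub_zero]
      rcases hcases with hc1 | hc2
      · have hmR : m ∈ supportV R := mem_supportV.mpr (right_ne_zero_of_mul hc1)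
        exact hExpR.2 m hmR hmne
      · rw [MvPolynomial.coeff_monomial_mul'] at hc2
        split_ifs at hc2 with hle
        · have hPi : ((m.1 - δ, m.2) : MonoIdx n r) ∈ supportV (P i) :=
            mem_supportV.mpr (right_ne_zero_of_mul hc2)
          have hne' : ((m.1 - δ, m.2) : MonoIdx n r) ≠ e i := by
            intro heq
            apply hmne
            have h1 := congrArg Prod.fst heq
            have h2' := congrArg Prod.snd heq
            simp only at h1 h2'
            refine Prod.ext_iff.mpr ⟨?_, h2'⟩
            rw [← h1, tsub_add_cancel_of_le hle]
          have hlt := hcompat _ _ δ ((he i).2 _ hPi hne')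
          rwa [tsub_add_cancel_of_le hle, Prod.mk.eta] at hlt
        · exact absurd rfl hc2
    obtain ⟨E'', hE''⟩ := exists_isExp rlt hR''0
    exact hmin E'' ⟨R'', hR''N, ⟨_, hu', hspec''⟩, hE''⟩ (hall E'' hE''.1)

/-- The set-of-leading-exponents equality, with the abstract fraction field `K`. -/
lemma seteq_gen (rlt : MonoIdx n r → MonoIdx n r → Prop)
    [IsWellOrder (MonoIdx n r) rlt]
    (hcompat : ∀ (a b : MonoIdx n r) (δ : Fin n →₀ ℕ),
      rlt a b → rlt (a.1 + δ, a.2) (b.1 + δ, b.2))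
    (N : Submodule (ParamRing k p n) (Fin r → ParamRing k p n))
    (P : Fin s → (Fin r → ParamRing k p n))
    (hGB : IsGroebnerBase rlt P N)
    (e : Fin s → MonoIdx n r) (he : ∀ i, IsExp rlt (P i) (e i))
    (c : Fin p → k)
    (hc : ∀ i, MvPolynomial.eval c ((P i (e i).2).coeff (e i).1) ≠ 0) :
    {E : MonoIdx n r | ∃ Q ∈ Submodule.span (MvPolynomial (Fin n) K)
        (toKg K '' (N : Set (Fin r → ParamRing k p n))), Q ≠ 0 ∧ IsExp rlt Q E} =
      {E : MonoIdx n r | ∃ Q ∈ Submodule.span (MvPolynomial (Fin n) k)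
        (toSpec c '' (N : Set (Fin r → ParamRing k p n))), Q ≠ 0 ∧ IsExp rlt Q E} := by
  ext E
  constructor
  · rintro ⟨Q, hQmem, hQ0, hE⟩
    obtain ⟨i, eg, hgi, h2, δ, hδ⟩ :=
      (groebner_toKg (K := K) rlt N P hGB).2 Q hQmem hQ0 E hE
    have heg : eg = e i := isExp_unique rlt hgi (isExp_toKg rlt (he i))
    subst heg
    have hexp : IsExp rlt (toSpec c (P i)) (e i) := isExp_toSpec rlt (he i) (hc i)
    have hexp' := isExp_monomial_mul rlt hcompat hexp δ
    have hEeq : E = ((e i).1 + δ, (e i).2) := Prod.ext_iff.mpr ⟨hδ, h2.symm⟩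
    refine ⟨(MvPolynomial.monomial δ (1 : k) : MvPolynomial (Fin n) k) • toSpec c (P i),
      Submodule.smul_mem _ _ (Submodule.subset_span ⟨P i, hGB.1 i, rfl⟩),
      ne_zero_of_mem_supportV hexp'.1, hEeq.symm ▸ hexp'⟩
  · rintro ⟨Q, hQmem, hQ0, hE⟩
    obtain ⟨i, δ, hEeq⟩ :=
      descent rlt hcompat N P hGB e he c hc hQmem hQ0 hE
    have hexp : IsExp rlt (toKg K (P i)) (e i) := isExp_toKg rlt (he i)
    have hexp' := isExp_monomial_mul rlt hcompat hexp δ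
    refine ⟨(MvPolynomial.monomial δ (1 : K) : MvPolynomial (Fin n) K) • toKg K (P i),
      Submodule.smul_mem _ _ (Submodule.subset_span ⟨P i, hGB.1 i, rfl⟩),
      ne_zero_of_mem_supportV hexp'.1, hEeq.symm ▸ hexp'⟩

/-- Part (2a): specializations form a Gröbner base. -/
lemma groebner_toSpec (rlt : MonoIdx n r → MonoIdx n r → Prop)
    [IsWellOrder (MonoIdx n r) rlt]
    (hcompat : ∀ (a b : MonoIdx n r) (δ : Fin n →₀ ℕ),
      rlt a b → rlt (a.1 + δ, a.2) (b.1 + δ, b.2))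
    (N : Submodule (ParamRing k p n) (Fin r → ParamRing k p n))
    (P : Fin s → (Fin r → ParamRing k p n))
    (hGB : IsGroebnerBase rlt P N)
    (e : Fin s → MonoIdx n r) (he : ∀ i, IsExp rlt (P i) (e i))
    (c : Fin p → k)
    (hc : ∀ i, MvPolynomial.eval c ((P i (e i).2).coeff (e i).1) ≠ 0) :
    IsGroebnerBase rlt (fun i => toSpec c (P i))
      (Submodule.span (MvPolynomial (Fin n) k)
        (toSpec c '' (N : Set (Fin r → ParamRing k p n)))) := by
  constructor
  · intro i
    exact Submodule.subset_span ⟨P i, hGB.1 i, rfl⟩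
  · intro Q hQmem hQ0 E hE
    obtain ⟨i, δ, hEeq⟩ := descent rlt hcompat N P hGB e he c hc hQmem hQ0 hE
    exact ⟨i, e i, isExp_toSpec rlt (he i) (hc i),
      by rw [hEeq], δ, by rw [hEeq]⟩

end AuxSpec

/-- **Gröbner bases specialize generically** (Oaku, Propositions 6 and 7; Proposition 9
of the paper).  Let `S = k[λ][x]`, `N ⊆ S^r` a submodule with Gröbner base
`P_1,…,P_s` with respect to a sum-compatible module well-order (on monomials in the
`x`-variables; the `λ`s are coefficients), let `e i` be the leading exponent of `P i`
and `q i ∈ k[λ]` its leading coefficient.  Then: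
(1) the images of the `P i` form a Gröbner base of `K ⊗ N` over `K = Frac(k[λ])`; and
(2) for every `c ∈ k^p` avoiding the hypersurfaces `q i = 0`, the specializations
`P i (c)` form a Gröbner base of the specialized module `N^c ⊆ k[x]^r`, and the sets of
leading exponents of `K ⊗ N` and `N^c` coincide. -/
theorem groebner_base_specialization
    (rlt : MonoIdx n r → MonoIdx n r → Prop) [IsWellOrder (MonoIdx n r) rlt]
    (hcompat : ∀ (a b : MonoIdx n r) (δ : Fin n →₀ ℕ),
      rlt a b → rlt (a.1 + δ, a.2) (b.1 + δ, b.2))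
    (N : Submodule (ParamRing k p n) (Fin r → ParamRing k p n))
    (P : Fin s → (Fin r → ParamRing k p n))
    (hGB : IsGroebnerBase rlt P N)
    (e : Fin s → MonoIdx n r) (he : ∀ i, IsExp rlt (P i) (e i)) :
    IsGroebnerBase rlt (fun i => toK (P i))
        (Submodule.span (MvPolynomial (Fin n) (ParamField k p))
          (toK '' (N : Set (Fin r → ParamRing k p n)))) ∧
      ∀ c : Fin p → k,
        (∀ i, MvPolynomial.eval c ((P i (e i).2).coeff (e i).1) ≠ 0) →
        (IsGroebnerBase rlt (fun i => toSpec c (P i))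
            (Submodule.span (MvPolynomial (Fin n) k)
              (toSpec c '' (N : Set (Fin r → ParamRing k p n)))) ∧
          {E : MonoIdx n r | ∃ Q ∈ Submodule.span (MvPolynomial (Fin n) (ParamField k p))
              (toK '' (N : Set (Fin r → ParamRing k p n))), Q ≠ 0 ∧ IsExp rlt Q E} =
            {E : MonoIdx n r | ∃ Q ∈ Submodule.span (MvPolynomial (Fin n) k)
              (toSpec c '' (N : Set (Fin r → ParamRing k p n))), Q ≠ 0 ∧ IsExp rlt Q E}) := by
  constructor
  · exact groebner_toKg (K := ParamField k p) rlt N P hGB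
  · intro c hc
    exact ⟨groebner_toSpec rlt hcompat N P hGB e he c hc,
      seteq_gen (K := ParamField k p) rlt hcompat N P hGB e he c hc⟩

end
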